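/- Let D be a reduced pipe dream and let (i,j), (p,q) be movable cross tiles with (p,q) northeast of (i,j) (p ≤ i and q ≥ j, (p,q)≠(i,j)) and (p,q) ∉ Shape_{ij}(D). Then M_{ij}(M_{pq}(D)) = M_{pq}(M_{ij}(D)). -/

import Mathlib

open Finset

/-- A pipe dream is encoded as a tiling of the (1-indexed) grid:
`true` = cross tile (+), `false` = bump tile (•). -/
abbrev PipeDream := ℕ × ℕ → Bool

namespace PipeDream

/-- All cross tiles lie in the staircase {(i,j) | 1 ≤ i, 1 ≤ j, i+j ≤ n+1}. -/
def InStaircase (n : ℕ) (D : PipeDream) : Prop :=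
  ∀ i j, D (i, j) = true → 1 ≤ i ∧ 1 ≤ j ∧ i + j ≤ n + 1

/-- Reading word: rows top to bottom, within each row right to left; a cross at
(i,j) contributes the simple transposition s_{i+j-1}. -/
def word (n : ℕ) (D : PipeDream) : List ℕ :=
  (List.range n).flatMap (fun i =>
    ((List.range n).reverse.filterMap (fun j =>
      if D (i + 1, j + 1) = true then some (i + j + 1) else none)))

/-- The permutation of ℕ realized by the wires of the pipe dream. -/
def perm (n : ℕ) (D : PipeDream) : Equiv.Perm ℕ :=
  (List.map (fun k => Equiv.swap k (k + 1)) (word n D)).prod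

def crossCount (n : ℕ) (D : PipeDream) : ℕ := (word n D).length

/-- Number of inversions of w among 1..n (the Coxeter length of w ∈ S_n). -/
def invCount (w : Equiv.Perm ℕ) (n : ℕ) : ℕ :=
  (((Finset.Icc 1 n) ×ˢ (Finset.Icc 1 n)).filter
    (fun p => p.1 < p.2 ∧ w p.2 < w p.1)).card

/-- Reduced pipe dreams for w ∈ S_n: crosses in the staircase, wires realize w,
and no two wires cross twice (equivalently, #crosses = ℓ(w)). -/
def RPD (n : ℕ) (w : Equiv.Perm ℕ) : Set PipeDream :=
  {D | InStaircase n D ∧ perm n D = w ∧ crossCount n D = invCount w n}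

/-- (i,j) is a movable cross tile: a cross with a bump above it in column j. -/
def Movable (D : PipeDream) (i j : ℕ) : Prop :=
  D (i, j) = true ∧ ∃ h, 1 ≤ h ∧ h < i ∧ D (h, j) = false

/-- h_{ij}(D): largest h ∈ [1,i-1] with a bump at (h,j). -/
def hIdx (D : PipeDream) (i j : ℕ) : ℕ :=
  ((Finset.Ico 1 i).filter (fun h => D (h, j) = false)).sup id

/-- k_{ij}(D): least k ∈ [j+1,n] with a bump at (i,k). -/
def kIdx (n : ℕ) (D : PipeDream) (i j : ℕ) : ℕ :=
  WithTop.untopD 0 (((Finset.Icc (j + 1) n).filter (fun k => D (i, k) = false)).min)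

/-- Rect_{ij}(D) = [h,i] × [j,k]. -/
def Rect (n : ℕ) (D : PipeDream) (i j : ℕ) : Finset (ℕ × ℕ) :=
  Finset.Icc (hIdx D i j, j) (i, kIdx n D i j)

/-- max_bump_row_{ij}(D): largest p ∈ [h,i) whose row contains a bump tile in Rect. -/
def maxBumpRow (n : ℕ) (D : PipeDream) (i j : ℕ) : ℕ :=
  ((Finset.Ico (hIdx D i j) i).filter
    (fun p => ∃ q ∈ Finset.Icc j (kIdx n D i j), D (p, q) = false)).sup id

/-- min_bump_col_{ij}(D): least q ∈ (j,k] whose column contains a bump tile in Rect. -/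
def minBumpCol (n : ℕ) (D : PipeDream) (i j : ℕ) : ℕ :=
  WithTop.untopD 0
    (((Finset.Icc (j + 1) (kIdx n D i j)).filter
      (fun q => ∃ p ∈ Finset.Icc (hIdx D i j) i, D (p, q) = false)).min)

/-- (i,j) is ladder movable: the bumps of Rect_{ij}(D) are exactly the three
corners (h,j), (h,k), (i,k). -/
def LadderMovable (n : ℕ) (D : PipeDream) (i j : ℕ) : Prop :=
  Movable D i j ∧
    ∀ p q, (p, q) ∈ Rect n D i j →
      (D (p, q) = false ↔
        ((p, q) = (hIdx D i j, j) ∨ (p, q) = (hIdx D i j, kIdx n D i j) ∨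
          (p, q) = (i, kIdx n D i j)))

/-- Generalized ladder move L_{ij}: swap the cross at (i,j) with the bump at (h,k). -/
def ladderMove (n : ℕ) (D : PipeDream) (i j : ℕ) : PipeDream :=
  fun st =>
    if st = (i, j) then false
    else if st = (hIdx D i j, kIdx n D i j) then true
    else D st

/-- One covering step of the ladder-move order on RPD(w). -/
def LadderStep (n : ℕ) (D Q : PipeDream) : Prop :=
  ∃ i j, LadderMovable n D i j ∧ Q = ladderMove n D i j

/-- D ≤ Q in the ladder-move order (Q is obtained from D by a possibly empty
sequence of generalized ladder moves). -/
def ladderLE (n : ℕ) (D Q : PipeDream) : Prop :=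
  Relation.ReflTransGen (LadderStep n) D Q

/-- One ladder-move step performed at a position northeast of (i,j). -/
def LadderStepNE (n i j : ℕ) (D Q : PipeDream) : Prop :=
  ∃ p q, p ≤ i ∧ j ≤ q ∧ LadderMovable n D p q ∧ Q = ladderMove n D p q

/-- V_{ij}(D): pipe dreams reachable from D by ladder moves at positions
northeast of (i,j), having a bump at (i,j). -/
def V (n : ℕ) (D : PipeDream) (i j : ℕ) : Set PipeDream :=
  {Q | Relation.ReflTransGen (LadderStepNE n i j) D Q ∧ Q (i, j) = false}

/-- Auxiliary construction of Path_{ij}(D), with fuel (the row number strictly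
decreases at each step, so fuel `i` always suffices). -/
def pathAux (n : ℕ) (D : PipeDream) (j : ℕ) : ℕ → ℕ × ℕ → Finset (ℕ × ℕ)
  | 0, _ => ∅
  | fuel + 1, (p, q) =>
      let p' := maxBumpRow n D p j
      let q' := WithTop.untopD j
        (((Finset.Icc j n).filter (fun t => D (p', t) = false)).min)
      let seg := ((Finset.Icc p' p).image fun r => (r, q)) ∪
        ((Finset.Icc q' q).image fun t => (p', t))
      if q' = j then seg else seg ∪ pathAux n D j fuel (p', q')

/-- Path_{ij}(D): the lattice path from (i, k_{ij}(D)) to (h_{ij}(D), j). -/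
def Path (n : ℕ) (D : PipeDream) (i j : ℕ) : Finset (ℕ × ℕ) :=
  pathAux n D j i (i, kIdx n D i j)

open scoped Classical in
/-- Shape_{ij}(D): tiles of Rect_{ij}(D) weakly below Path_{ij}(D). -/
noncomputable def Shape (n : ℕ) (D : PipeDream) (i j : ℕ) : Finset (ℕ × ℕ) :=
  (Rect n D i j).filter fun st => ∃ p' ≤ st.1, (p', st.2) ∈ Path n D i j

/-- The move operation M_{ij} of Definition 3.4, written with fuel:
(i) if max_bump_row = h and min_bump_col = k, apply the ladder move L_{ij};
(ii) if max_bump_row = a > h, recurse as M_{ij} ∘ M_{aj};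
(iii) otherwise recurse as M_{ij} ∘ M_{ib} with b = min_bump_col. -/
def moveAux (n : ℕ) : ℕ → PipeDream → ℕ → ℕ → PipeDream
  | 0, D, _, _ => D
  | fuel + 1, D, i, j =>
      if maxBumpRow n D i j = hIdx D i j ∧ minBumpCol n D i j = kIdx n D i j then
        ladderMove n D i j
      else if hIdx D i j < maxBumpRow n D i j then
        moveAux n fuel (moveAux n fuel D (maxBumpRow n D i j) j) i j
      else
        moveAux n fuel (moveAux n fuel D i (minBumpCol n D i j)) i j

/-- The move operation M_{ij}.  The fuel `(n+2)^(n+2)` vastly exceeds the depth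
of the recursion of Definition 3.4, so `move` agrees with M on all inputs for
which the recursion makes sense. -/
def move (n : ℕ) (D : PipeDream) (i j : ℕ) : PipeDream :=
  moveAux n ((n + 2) ^ (n + 2)) D i j

/-- (p,q) is northeast of (i,j). -/
def NorthEastOf (p q i j : ℕ) : Prop := p ≤ i ∧ j ≤ q

/-- (i,j) and (p,q) are southwest-incomparable. -/
def SWIncomparable (i j p q : ℕ) : Prop := (i < p ∧ j < q) ∨ (p < i ∧ q < j)

end PipeDream
namespace PipeDream

/-! ### Generic helpers -/

lemma sup_mem_of_ne {S : Finset ℕ} (h : S.sup id ≠ 0 ∨ S.Nonempty) : S.sup id ∈ S := by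
  rcases h with h | h
  · have hne : S.Nonempty := by
      by_contra hc
      rw [Finset.not_nonempty_iff_eq_empty] at hc
      simp [hc] at h
    obtain ⟨b, hb, he⟩ := Finset.exists_mem_eq_sup S hne id
    simpa [he] using hb
  · obtain ⟨b, hb, he⟩ := Finset.exists_mem_eq_sup S h id
    simpa [he] using hb

lemma min_untop_mem {S : Finset ℕ} (h : S.Nonempty) : WithTop.untopD 0 S.min ∈ S := by
  rw [← Finset.coe_min' h]
  exact S.min'_mem h

lemma min_untop_le {S : Finset ℕ} {b : ℕ} (hb : b ∈ S) : WithTop.untopD 0 S.min ≤ b := by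
  have h : S.Nonempty := ⟨b, hb⟩
  rw [← Finset.coe_min' h]
  exact S.min'_le b hb

/-! ### hIdx -/

lemma hIdx_lt {D : PipeDream} {x y : ℕ} (hx : 1 ≤ x) : hIdx D x y < x := by
  apply Finset.sup_lt_iff (by exact hx) |>.mpr
  intro b hb
  exact (Finset.mem_Ico.1 (Finset.mem_filter.1 hb).1).2

lemma hIdx_ge {D : PipeDream} {x y r : ℕ} (hr : 1 ≤ r) (hrx : r < x)
    (hD : D (r, y) = false) : r ≤ hIdx D x y := by
  apply Finset.le_sup (f := id)
  simp [Finset.mem_Ico, hr, hrx, hD]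

lemma hIdx_spec {D : PipeDream} {x y : ℕ} (hne : ∃ r, 1 ≤ r ∧ r < x ∧ D (r, y) = false) :
    1 ≤ hIdx D x y ∧ hIdx D x y < x ∧ D (hIdx D x y, y) = false := by
  obtain ⟨r, hr, hrx, hD⟩ := hne
  have hmem : hIdx D x y ∈ (Finset.Ico 1 x).filter (fun h => D (h, y) = false) := by
    apply sup_mem_of_ne
    exact Or.inr ⟨r, by simp [Finset.mem_Ico, hr, hrx, hD]⟩
  simp only [Finset.mem_filter, Finset.mem_Ico] at hmem
  exact ⟨hmem.1.1, hmem.1.2, hmem.2⟩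

lemma hIdx_congr {D D' : PipeDream} {x y : ℕ}
    (hag : ∀ r, r < x → D' (r, y) = D (r, y)) : hIdx D' x y = hIdx D x y := by
  unfold hIdx
  congr 1
  apply Finset.filter_congr
  intro r hr
  rw [hag r (Finset.mem_Ico.1 hr).2]

lemma hIdx_stable {D D' : PipeDream} {x y H : ℕ}
    (hw : ∃ r, H ≤ r ∧ 1 ≤ r ∧ r < x ∧ D (r, y) = false)
    (hag : ∀ r, H ≤ r → D' (r, y) = D (r, y)) :
    hIdx D' x y = hIdx D x y ∧ H ≤ hIdx D x y := by
  obtain ⟨r, hHr, hr, hrx, hD⟩ := hw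
  have h1 : r ≤ hIdx D x y := hIdx_ge hr hrx hD
  have h1' : r ≤ hIdx D' x y := hIdx_ge hr hrx (by rw [hag r hHr]; exact hD)
  have hH : H ≤ hIdx D x y := le_trans hHr h1
  have hH' : H ≤ hIdx D' x y := le_trans hHr h1'
  have hs := hIdx_spec (D := D) (x := x) (y := y) ⟨r, hr, hrx, hD⟩
  have hs' := hIdx_spec (D := D') (x := x) (y := y) ⟨r, hr, hrx, by rw [hag r hHr]; exact hD⟩
  constructor
  · apply le_antisymm
    · exact hIdx_ge hs'.1 hs'.2.1 (by rw [← hag _ hH']; exact hs'.2.2)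
    · exact hIdx_ge hs.1 hs.2.1 (by rw [hag _ hH]; exact hs.2.2)
  · exact hH

/-! ### kIdx -/

lemma kIdx_spec {D : PipeDream} {x y : ℕ} (hne : ∃ c, y + 1 ≤ c ∧ c ≤ n ∧ D (x, c) = false) :
    y + 1 ≤ kIdx n D x y ∧ kIdx n D x y ≤ n ∧ D (x, kIdx n D x y) = false := by
  obtain ⟨c, hc, hcn, hD⟩ := hne
  have hmem : kIdx n D x y ∈ (Finset.Icc (y+1) n).filter (fun k => D (x, k) = false) := by
    apply min_untop_mem
    exact ⟨c, by simp [Finset.mem_Icc, hc, hcn, hD]⟩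
  simp only [Finset.mem_filter, Finset.mem_Icc] at hmem
  exact ⟨hmem.1.1, hmem.1.2, hmem.2⟩

lemma kIdx_le {D : PipeDream} {x y c : ℕ} (hc : y + 1 ≤ c) (hcn : c ≤ n)
    (hD : D (x, c) = false) : kIdx n D x y ≤ c := by
  apply min_untop_le
  simp [Finset.mem_Icc, hc, hcn, hD]

lemma kIdx_congr {D D' : PipeDream} {x y : ℕ}
    (hag : ∀ c, D' (x, c) = D (x, c)) : kIdx n D' x y = kIdx n D x y := by
  unfold kIdx
  congr 2
  apply Finset.filter_congr
  intro c _
  rw [hag c]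

lemma kIdx_stable {D D' : PipeDream} {x y K : ℕ}
    (hw : ∃ c, y + 1 ≤ c ∧ c ≤ K ∧ c ≤ n ∧ D (x, c) = false)
    (hag : ∀ c, y + 1 ≤ c → c ≤ K → D' (x, c) = D (x, c)) :
    kIdx n D' x y = kIdx n D x y ∧ kIdx n D x y ≤ K := by
  obtain ⟨c, hc, hcK, hcn, hD⟩ := hw
  have h1 : kIdx n D x y ≤ K := le_trans (kIdx_le hc hcn hD) hcK
  have hD' : D' (x, c) = false := by rw [hag c hc hcK]; exact hD
  have h1' : kIdx n D' x y ≤ K := le_trans (kIdx_le hc hcn hD') hcK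
  have hs := kIdx_spec (D := D) (x := x) (y := y) ⟨c, hc, hcn, hD⟩
  have hs' := kIdx_spec (D := D') (x := x) (y := y) ⟨c, hc, hcn, hD'⟩
  refine ⟨le_antisymm ?_ ?_, h1⟩
  · exact kIdx_le hs.1 hs.2.1 (by rw [hag _ hs.1 h1]; exact hs.2.2)
  · exact kIdx_le hs'.1 hs'.2.1 (by rw [← hag _ hs'.1 h1']; exact hs'.2.2)

end PipeDream

namespace PipeDream

/-! ### maxBumpRow / minBumpCol -/

lemma hIdx_le {D : PipeDream} {x y : ℕ} : hIdx D x y ≤ x := by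
  apply Finset.sup_le
  intro b hb
  exact le_of_lt (Finset.mem_Ico.1 (Finset.mem_filter.1 hb).1).2

lemma maxBumpRow_lt {D : PipeDream} {x y : ℕ} (hx : 1 ≤ x) : maxBumpRow n D x y < x := by
  apply Finset.sup_lt_iff (by exact hx) |>.mpr
  intro b hb
  exact (Finset.mem_Ico.1 (Finset.mem_filter.1 hb).1).2

lemma maxBumpRow_le {D : PipeDream} {x y : ℕ} : maxBumpRow n D x y ≤ x := by
  apply Finset.sup_le
  intro b hb
  exact le_of_lt (Finset.mem_Ico.1 (Finset.mem_filter.1 hb).1).2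

lemma maxBumpRow_ge {D : PipeDream} {x y r c : ℕ} (h1 : hIdx D x y ≤ r) (h2 : r < x)
    (h3 : y ≤ c) (h4 : c ≤ kIdx n D x y) (h5 : D (r, c) = false) :
    r ≤ maxBumpRow n D x y := by
  apply Finset.le_sup (f := id)
  simp only [Finset.mem_filter, Finset.mem_Ico, Finset.mem_Icc]
  exact ⟨⟨h1, h2⟩, c, ⟨h3, h4⟩, h5⟩

lemma maxBumpRow_spec {D : PipeDream} {x y : ℕ} (hne : 1 ≤ maxBumpRow n D x y) :
    hIdx D x y ≤ maxBumpRow n D x y ∧ maxBumpRow n D x y < x ∧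
      ∃ c, y ≤ c ∧ c ≤ kIdx n D x y ∧ D (maxBumpRow n D x y, c) = false := by
  have hmem := sup_mem_of_ne (S := (Finset.Ico (hIdx D x y) x).filter
    (fun p => ∃ q ∈ Finset.Icc y (kIdx n D x y), D (p, q) = false))
    (Or.inl (show maxBumpRow n D x y ≠ 0 by omega))
  simp only [Finset.mem_filter, Finset.mem_Ico, Finset.mem_Icc] at hmem
  obtain ⟨⟨ha1, ha2⟩, c, ⟨hc1, hc2⟩, hc3⟩ := hmem
  exact ⟨ha1, ha2, c, hc1, hc2, hc3⟩

lemma minBumpCol_le {D : PipeDream} {x y c r : ℕ} (h1 : y + 1 ≤ c) (h2 : c ≤ kIdx n D x y)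
    (h3 : hIdx D x y ≤ r) (h4 : r ≤ x) (h5 : D (r, c) = false) :
    minBumpCol n D x y ≤ c := by
  apply min_untop_le
  simp only [Finset.mem_filter, Finset.mem_Icc]
  exact ⟨⟨h1, h2⟩, r, ⟨h3, h4⟩, h5⟩

lemma minBumpCol_spec {D : PipeDream} {x y : ℕ}
    (hne : ∃ c r, y + 1 ≤ c ∧ c ≤ kIdx n D x y ∧ hIdx D x y ≤ r ∧ r ≤ x ∧ D (r, c) = false) :
    y + 1 ≤ minBumpCol n D x y ∧ minBumpCol n D x y ≤ kIdx n D x y ∧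
      ∃ r, hIdx D x y ≤ r ∧ r ≤ x ∧ D (r, minBumpCol n D x y) = false := by
  obtain ⟨c, r, hc1, hc2, hr1, hr2, hD⟩ := hne
  have hmem : minBumpCol n D x y ∈ (Finset.Icc (y+1) (kIdx n D x y)).filter
      (fun q => ∃ p ∈ Finset.Icc (hIdx D x y) x, D (p, q) = false) := by
    apply min_untop_mem
    exact ⟨c, by
      simp only [Finset.mem_filter, Finset.mem_Icc]
      exact ⟨⟨hc1, hc2⟩, r, ⟨hr1, hr2⟩, hD⟩⟩
  simp only [Finset.mem_filter, Finset.mem_Icc] at hmem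
  obtain ⟨⟨hb1, hb2⟩, rr, hrr, hDD⟩ := hmem
  exact ⟨hb1, hb2, rr, hrr.1, hrr.2, hDD⟩

/-- In row `x`, all tiles strictly between `y` and `kIdx` are crosses. -/
lemma row_cross_of_lt_kIdx {D : PipeDream} {x y c : ℕ}
    (h1 : y + 1 ≤ c) (h2 : c < kIdx n D x y) (hkn : kIdx n D x y ≤ n) :
    D (x, c) = true := by
  by_contra hc
  have hc' : D (x, c) = false := by
    cases hDc : D (x, c) with
    | false => rfl
    | true => exact absurd hDc hc
  have := kIdx_le (n := n) h1 (by omega) hc'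
  omega

/-- Structure facts for the second branch of `moveAux`. -/
lemma caseII_facts {D : PipeDream} {x y : ℕ}
    (hb : ∃ c, y + 1 ≤ c ∧ c ≤ n ∧ D (x, c) = false) (hx : 1 ≤ x)
    (h2 : hIdx D x y < maxBumpRow n D x y) :
    1 ≤ maxBumpRow n D x y ∧ maxBumpRow n D x y < x ∧
      ∃ c, y + 1 ≤ c ∧ c ≤ kIdx n D x y ∧ D (maxBumpRow n D x y, c) = false := by
  have ha1 : 1 ≤ maxBumpRow n D x y := by omega
  obtain ⟨hha, hax, c, hc1, hc2, hc3⟩ := maxBumpRow_spec (D := D) (x := x) (y := y) ha1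
  refine ⟨ha1, hax, c, ?_, hc2, hc3⟩
  -- c ≠ y, else hIdx ≥ maxBumpRow
  rcases Nat.eq_or_lt_of_le hc1 with hcy | hcy
  · exfalso
    subst hcy
    have : maxBumpRow n D x y ≤ hIdx D x y := hIdx_ge ha1 hax hc3
    omega
  · omega

/-- Structure facts for the third branch of `moveAux`. -/
lemma caseIII_facts {D : PipeDream} {x y : ℕ}
    (hb : ∃ c, y + 1 ≤ c ∧ c ≤ n ∧ D (x, c) = false) (hx : 1 ≤ x)
    (h1 : ¬(maxBumpRow n D x y = hIdx D x y ∧ minBumpCol n D x y = kIdx n D x y))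
    (h2 : ¬ hIdx D x y < maxBumpRow n D x y) :
    maxBumpRow n D x y = hIdx D x y ∧ y + 1 ≤ minBumpCol n D x y ∧
      minBumpCol n D x y < kIdx n D x y ∧
      ∃ r, hIdx D x y ≤ r ∧ r < x ∧ D (r, minBumpCol n D x y) = false := by
  have hk := kIdx_spec (n := n) hb
  have hEq : maxBumpRow n D x y = hIdx D x y := by
    rcases Nat.eq_zero_or_pos (hIdx D x y) with h0 | h0
    · omega
    · have hfacts := hIdx_spec (D := D) (x := x) (y := y) ?hne
      case hne =>
        have hm := sup_mem_of_ne (S := (Finset.Ico 1 x).filter (fun h => D (h, y) = false))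
          (Or.inl (show hIdx D x y ≠ 0 by omega))
        simp only [Finset.mem_filter, Finset.mem_Ico] at hm
        exact ⟨hIdx D x y, hm.1.1, hm.1.2, hm.2⟩
      have : hIdx D x y ≤ maxBumpRow n D x y :=
        maxBumpRow_ge le_rfl hfacts.2.1 (by omega) (by omega) hfacts.2.2
      omega
  have hbne : ∃ c r, y + 1 ≤ c ∧ c ≤ kIdx n D x y ∧ hIdx D x y ≤ r ∧ r ≤ x ∧ D (r, c) = false :=
    ⟨kIdx n D x y, x, hk.1, le_rfl, hIdx_le, le_rfl, hk.2.2⟩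
  obtain ⟨hb1, hb2, r, hr1, hr2, hr3⟩ := minBumpCol_spec hbne
  have hblt : minBumpCol n D x y < kIdx n D x y := by
    rcases Nat.eq_or_lt_of_le hb2 with h | h
    · exact absurd ⟨hEq, h⟩ h1
    · exact h
  refine ⟨hEq, hb1, hblt, r, hr1, ?_, hr3⟩
  rcases Nat.eq_or_lt_of_le hr2 with hrx | hrx
  · exfalso
    have := row_cross_of_lt_kIdx (n := n) (D := D) hb1 hblt hk.2.1
    rw [hrx] at hr3
    rw [this] at hr3
    simp at hr3
  · exact hrx

end PipeDream

namespace PipeDream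

lemma moveAux_succ (f : ℕ) (D : PipeDream) (x y : ℕ) :
    moveAux n (f+1) D x y =
      if maxBumpRow n D x y = hIdx D x y ∧ minBumpCol n D x y = kIdx n D x y then
        ladderMove n D x y
      else if hIdx D x y < maxBumpRow n D x y then
        moveAux n f (moveAux n f D (maxBumpRow n D x y) y) x y
      else
        moveAux n f (moveAux n f D x (minBumpCol n D x y)) x y := rfl

lemma ladderMove_apply (D : PipeDream) (x y : ℕ) (st : ℕ × ℕ) :
    ladderMove n D x y st =
      if st = (x, y) then false
      else if st = (hIdx D x y, kIdx n D x y) then true else D st := rfl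

/-- `moveAux` never modifies tiles strictly below row `x`. -/
lemma rowBound : ∀ (f : ℕ) (D : PipeDream) (x y : ℕ) (st : ℕ × ℕ),
    x < st.1 → moveAux n f D x y st = D st := by
  intro f
  induction f with
  | zero => intro D x y st _; rfl
  | succ f ih =>
    intro D x y st hst
    rw [moveAux_succ]
    split_ifs with hbase hii
    · rw [ladderMove_apply]
      rw [if_neg, if_neg]
      · rintro rfl
        have := hIdx_le (D := D) (x := x) (y := y)
        simp only at hst
        omega
      · rintro rfl
        simp only at hst
        omega
    · rw [ih _ _ _ _ hst, ih _ _ _ _ ?_]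
      have := maxBumpRow_le (n := n) (D := D) (x := x) (y := y)
      omega
    · rw [ih _ _ _ _ hst, ih _ _ _ _ hst]

/-- Crosses are only ever created strictly above the current row. -/
lemma crossRowMono : ∀ (f : ℕ) (D : PipeDream) (x y : ℕ) (st : ℕ × ℕ), 1 ≤ x →
    moveAux n f D x y st = true → D st = true ∨ st.1 < x := by
  intro f
  induction f with
  | zero => intro D x y st _ h; exact Or.inl h
  | succ f ih =>
    intro D x y st hx h
    rw [moveAux_succ] at h
    split_ifs at h with hbase hii
    · rw [ladderMove_apply] at h
      by_cases h1 : st = (x, y)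
      · rw [if_pos h1] at h; exact absurd h (by simp)
      · rw [if_neg h1] at h
        by_cases h2 : st = (hIdx D x y, kIdx n D x y)
        · right; rw [h2]; exact hIdx_lt hx
        · rw [if_neg h2] at h; exact Or.inl h
    · have ha1 : 1 ≤ maxBumpRow n D x y := by omega
      have hax : maxBumpRow n D x y < x := maxBumpRow_lt hx
      rcases ih _ _ _ _ hx h with h' | h'
      · rcases ih _ _ _ _ ha1 h' with h'' | h''
        · exact Or.inl h''
        · exact Or.inr (by omega)
      · exact Or.inr h'
    · rcases ih _ _ _ _ hx h with h' | h'
      · exact ih _ _ _ _ hx h'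
      · exact Or.inr h'

/-- From the invariant, a bump persists at `(x, kIdx)`. -/
lemma hb_step {f : ℕ} {D : PipeDream} {x y : ℕ} (hx : 1 ≤ x)
    (hk : D (x, kIdx n D x y) = false) :
    ∀ y', moveAux n f D x y' (x, kIdx n D x y) = false := by
  intro y'
  cases hE : moveAux n f D x y' (x, kIdx n D x y) with
  | false => rfl
  | true =>
    exfalso
    rcases crossRowMono f D x y' _ hx hE with h | h
    · rw [h] at hk; exact absurd hk (by simp)
    · simp only at h; omega

/-- Crosses are only ever created strictly to the right of the current column. -/
lemma crossColMono : ∀ (f : ℕ) (D : PipeDream) (x y : ℕ) (st : ℕ × ℕ),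
    (∃ c, y + 1 ≤ c ∧ c ≤ n ∧ D (x, c) = false) → 1 ≤ x →
    moveAux n f D x y st = true → D st = true ∨ y < st.2 := by
  intro f
  induction f with
  | zero => intro D x y st _ _ h; exact Or.inl h
  | succ f ih =>
    intro D x y st hb hx h
    have hk := kIdx_spec (n := n) hb
    rw [moveAux_succ] at h
    split_ifs at h with hbase hii
    · rw [ladderMove_apply] at h
      by_cases h1 : st = (x, y)
      · rw [if_pos h1] at h; exact absurd h (by simp)
      · rw [if_neg h1] at h
        by_cases h2 : st = (hIdx D x y, kIdx n D x y)
        · right; rw [h2]; simp only; omega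
        · rw [if_neg h2] at h; exact Or.inl h
    · -- case II
      obtain ⟨ha1, hax, c, hc1, hc2, hc3⟩ := caseII_facts hb hx hii
      have hbA : ∃ c, y + 1 ≤ c ∧ c ≤ n ∧ D (maxBumpRow n D x y, c) = false :=
        ⟨c, hc1, by omega, hc3⟩
      have hbO : ∃ c, y + 1 ≤ c ∧ c ≤ n ∧
          (moveAux n f D (maxBumpRow n D x y) y) (x, c) = false := by
        refine ⟨kIdx n D x y, hk.1, hk.2.1, ?_⟩
        rw [rowBound f D _ y (x, kIdx n D x y) (by simp only; omega)]
        exact hk.2.2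
      rcases ih _ _ _ _ hbO hx h with h' | h'
      · exact ih _ _ _ _ hbA ha1 h'
      · exact Or.inr h'
    · -- case III
      obtain ⟨hEq, hb1, hb2, r, hr1, hr2, hr3⟩ := caseIII_facts hb hx hbase hii
      have hbA : ∃ c, minBumpCol n D x y + 1 ≤ c ∧ c ≤ n ∧ D (x, c) = false :=
        ⟨kIdx n D x y, by omega, hk.2.1, hk.2.2⟩
      have hbO : ∃ c, y + 1 ≤ c ∧ c ≤ n ∧
          (moveAux n f D x (minBumpCol n D x y)) (x, c) = false :=
        ⟨kIdx n D x y, hk.1, hk.2.1, hb_step hx hk.2.2 _⟩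
      rcases ih _ _ _ _ hbO hx h with h' | h'
      · rcases ih _ _ _ _ hbA hx h' with h'' | h''
        · exact Or.inl h''
        · exact Or.inr (by omega)
      · exact Or.inr h'

end PipeDream

namespace PipeDream

lemma maxBumpRow_congr {D D' : PipeDream} {x y : ℕ}
    (hh : hIdx D' x y = hIdx D x y) (hk : kIdx n D' x y = kIdx n D x y)
    (hag : ∀ r c, hIdx D x y ≤ r → r < x → y ≤ c → c ≤ kIdx n D x y →
      D' (r, c) = D (r, c)) :
    maxBumpRow n D' x y = maxBumpRow n D x y := by
  unfold maxBumpRow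
  rw [hh, hk]
  congr 1
  apply Finset.filter_congr
  intro r hr
  simp only [Finset.mem_Ico] at hr
  constructor
  · rintro ⟨c, hc, hDc⟩
    simp only [Finset.mem_Icc] at hc
    exact ⟨c, Finset.mem_Icc.2 hc, by rw [← hag r c hr.1 hr.2 hc.1 hc.2]; exact hDc⟩
  · rintro ⟨c, hc, hDc⟩
    simp only [Finset.mem_Icc] at hc
    exact ⟨c, Finset.mem_Icc.2 hc, by rw [hag r c hr.1 hr.2 hc.1 hc.2]; exact hDc⟩

lemma minBumpCol_congr {D D' : PipeDream} {x y : ℕ}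
    (hh : hIdx D' x y = hIdx D x y) (hk : kIdx n D' x y = kIdx n D x y)
    (hag : ∀ r c, hIdx D x y ≤ r → r ≤ x → y ≤ c → c ≤ kIdx n D x y →
      D' (r, c) = D (r, c)) :
    minBumpCol n D' x y = minBumpCol n D x y := by
  unfold minBumpCol
  rw [hh, hk]
  congr 2
  apply Finset.filter_congr
  intro c hc
  simp only [Finset.mem_Icc] at hc
  constructor
  · rintro ⟨r, hr, hDr⟩
    simp only [Finset.mem_Icc] at hr
    exact ⟨r, Finset.mem_Icc.2 hr, by
      rw [← hag r c hr.1 hr.2 (by omega) hc.2]; exact hDr⟩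
  · rintro ⟨r, hr, hDr⟩
    simp only [Finset.mem_Icc] at hr
    exact ⟨r, Finset.mem_Icc.2 hr, by
      rw [hag r c hr.1 hr.2 (by omega) hc.2]; exact hDr⟩

/-- MEGA confinement: under the invariant, `moveAux` at `(x,y)` only reads and
writes tiles in rows `≤ x` and columns in `[y, K]`. -/
lemma mega : ∀ (f : ℕ) (D D' : PipeDream) (x y K : ℕ),
    1 ≤ x → y ≤ K →
    (∃ c, y + 1 ≤ c ∧ c ≤ K ∧ c ≤ n ∧ D (x, c) = false) →
    (∀ st : ℕ × ℕ, st.1 ≤ x → y ≤ st.2 → st.2 ≤ K → D' st = D st) →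
    (∀ st : ℕ × ℕ, st.2 < y ∨ K < st.2 →
      moveAux n f D x y st = D st ∧ moveAux n f D' x y st = D' st)
    ∧ (∀ st : ℕ × ℕ, st.1 ≤ x → y ≤ st.2 → st.2 ≤ K →
      moveAux n f D' x y st = moveAux n f D x y st) := by
  intro f
  induction f with
  | zero =>
    intro D D' x y K hx hK hb hag
    exact ⟨fun st _ => ⟨rfl, rfl⟩, fun st h1 h2 h3 => hag st h1 h2 h3⟩
  | succ f ih =>
    intro D D' x y K hx hK hb hag
    obtain ⟨c₀, hc₀1, hc₀K, hc₀n, hc₀D⟩ := hb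
    have hbn : ∃ c, y + 1 ≤ c ∧ c ≤ n ∧ D (x, c) = false := ⟨c₀, hc₀1, hc₀n, hc₀D⟩
    have hk := kIdx_spec (n := n) hbn
    have hkK : kIdx n D x y ≤ K := le_trans (kIdx_le hc₀1 hc₀n hc₀D) hc₀K
    -- index agreement
    have hh' : hIdx D' x y = hIdx D x y :=
      hIdx_congr (fun r hr => hag (r, y) (by simp only; omega) le_rfl hK)
    have hk' : kIdx n D' x y = kIdx n D x y :=
      (kIdx_stable ⟨c₀, hc₀1, hc₀K, hc₀n, hc₀D⟩
        (fun c hc1 hc2 => hag (x, c) le_rfl (by omega) hc2)).1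
    have hagR : ∀ r c, hIdx D x y ≤ r → r ≤ x → y ≤ c → c ≤ kIdx n D x y →
        D' (r, c) = D (r, c) := fun r c _ h2 h3 h4 =>
      hag (r, c) h2 h3 (le_trans h4 hkK)
    have ha' : maxBumpRow n D' x y = maxBumpRow n D x y :=
      maxBumpRow_congr hh' hk' (fun r c h1 h2 h3 h4 => hagR r c h1 (le_of_lt h2) h3 h4)
    have hbc' : minBumpCol n D' x y = minBumpCol n D x y :=
      minBumpCol_congr hh' hk' hagR
    rw [moveAux_succ, moveAux_succ (D := D'), hh', hk', ha', hbc']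
    by_cases hbase : maxBumpRow n D x y = hIdx D x y ∧ minBumpCol n D x y = kIdx n D x y
    · rw [if_pos hbase, if_pos hbase]
      constructor
      · intro st hst
        constructor <;>
        · rw [ladderMove_apply]
          rw [if_neg, if_neg]
          · rintro rfl; simp only at hst; try rw [hh', hk'] at hst
            omega
          · rintro rfl; simp only at hst; omega
      · intro st h1 h2 h3
        rw [ladderMove_apply, ladderMove_apply, hh', hk']
        split_ifs with hc1 hc2
        · rfl
        · rfl
        · exact hag st h1 h2 h3
    · rw [if_neg hbase, if_neg hbase]
      by_cases hii : hIdx D x y < maxBumpRow n D x y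
      · rw [if_pos hii, if_pos hii]
        obtain ⟨ha1, hax, c₂, hc₂1, hc₂2, hc₂3⟩ := caseII_facts hbn hx hii
        set a := maxBumpRow n D x y with haDef
        have hb_sub : ∃ c, y + 1 ≤ c ∧ c ≤ K ∧ c ≤ n ∧ D (a, c) = false :=
          ⟨c₂, hc₂1, le_trans hc₂2 hkK, le_trans hc₂2 hk.2.1, hc₂3⟩
        have hag_sub : ∀ st : ℕ × ℕ, st.1 ≤ a → y ≤ st.2 → st.2 ≤ K → D' st = D st :=
          fun st h1 h2 h3 => hag st (le_trans h1 (le_of_lt hax)) h2 h3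
        have IH1 := ih D D' a y K ha1 hK hb_sub hag_sub
        set D₁ := moveAux n f D a y with hD₁
        set D₁' := moveAux n f D' a y with hD₁'
        have hag₂ : ∀ st : ℕ × ℕ, st.1 ≤ x → y ≤ st.2 → st.2 ≤ K → D₁' st = D₁ st := by
          intro st h1 h2 h3
          by_cases hsa : st.1 ≤ a
          · exact IH1.2 st hsa h2 h3
          · rw [hD₁, hD₁', rowBound f D a y st (by omega), rowBound f D' a y st (by omega)]
            exact hag st h1 h2 h3
        have hb₂ : ∃ c, y + 1 ≤ c ∧ c ≤ K ∧ c ≤ n ∧ D₁ (x, c) = false := by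
          refine ⟨kIdx n D x y, hk.1, hkK, hk.2.1, ?_⟩
          rw [hD₁, rowBound f D a y _ (by simp only; omega)]
          exact hk.2.2
        have IH2 := ih D₁ D₁' x y K hx hK hb₂ hag₂
        constructor
        · intro st hst
          exact ⟨by rw [(IH2.1 st hst).1, (IH1.1 st hst).1],
                 by rw [(IH2.1 st hst).2, (IH1.1 st hst).2]⟩
        · exact IH2.2
      · rw [if_neg hii, if_neg hii]
        obtain ⟨hEq, hbb1, hbb2, r, hr1, hr2, hr3⟩ := caseIII_facts hbn hx hbase hii
        set b := minBumpCol n D x y with hbDef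
        have hb_sub : ∃ c, b + 1 ≤ c ∧ c ≤ K ∧ c ≤ n ∧ D (x, c) = false :=
          ⟨kIdx n D x y, by omega, hkK, hk.2.1, hk.2.2⟩
        have hag_sub : ∀ st : ℕ × ℕ, st.1 ≤ x → b ≤ st.2 → st.2 ≤ K → D' st = D st :=
          fun st h1 h2 h3 => hag st h1 (by omega) h3
        have IH1 := ih D D' x b K hx (by omega) hb_sub hag_sub
        set D₁ := moveAux n f D x b with hD₁
        set D₁' := moveAux n f D' x b with hD₁'
        have hag₂ : ∀ st : ℕ × ℕ, st.1 ≤ x → y ≤ st.2 → st.2 ≤ K → D₁' st = D₁ st := by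
          intro st h1 h2 h3
          by_cases hsb : b ≤ st.2
          · exact IH1.2 st h1 hsb h3
          · rw [(IH1.1 st (Or.inl (by omega))).1, (IH1.1 st (Or.inl (by omega))).2]
            exact hag st h1 h2 h3
        have hb₂ : ∃ c, y + 1 ≤ c ∧ c ≤ K ∧ c ≤ n ∧ D₁ (x, c) = false :=
          ⟨kIdx n D x y, hk.1, hkK, hk.2.1, hb_step hx hk.2.2 b⟩
        have IH2 := ih D₁ D₁' x y K hx hK hb₂ hag₂
        constructor
        · intro st hst
          have hst' : st.2 < b ∨ K < st.2 := by omega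
          exact ⟨by rw [(IH2.1 st hst).1, (IH1.1 st hst').1],
                 by rw [(IH2.1 st hst).2, (IH1.1 st hst').2]⟩
        · exact IH2.2

end PipeDream

namespace PipeDream

/-- Row confinement: under the invariants, `moveAux` at `(x,y)` only reads and
writes tiles in rows `≥ H` (and writes only in columns `≥ y`). -/
lemma rowConf : ∀ (f : ℕ) (D D' : PipeDream) (x y H : ℕ),
    1 ≤ x →
    (∃ c, y + 1 ≤ c ∧ c ≤ n ∧ D (x, c) = false) →
    (∃ r, H ≤ r ∧ 1 ≤ r ∧ r < x ∧ D (r, y) = false) →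
    (∀ st : ℕ × ℕ, H ≤ st.1 → D' st = D st) →
    (∀ st : ℕ × ℕ, st.1 < H ∨ st.2 < y →
      moveAux n f D x y st = D st ∧ moveAux n f D' x y st = D' st)
    ∧ (∀ st : ℕ × ℕ, H ≤ st.1 → moveAux n f D' x y st = moveAux n f D x y st) := by
  intro f
  induction f with
  | zero =>
    intro D D' x y H hx hb hcol hag
    exact ⟨fun st _ => ⟨rfl, rfl⟩, fun st h1 => hag st h1⟩
  | succ f ih =>
    intro D D' x y H hx hb hcol hag
    have hk := kIdx_spec (n := n) hb
    obtain ⟨r₀, hr₀H, hr₀1, hr₀x, hr₀D⟩ := hcol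
    have hHx : H < x := by omega
    have hhs := hIdx_spec (D := D) (x := x) (y := y) ⟨r₀, hr₀1, hr₀x, hr₀D⟩
    have hH : H ≤ hIdx D x y := le_trans hr₀H (hIdx_ge hr₀1 hr₀x hr₀D)
    -- index agreement
    have hh' : hIdx D' x y = hIdx D x y :=
      (hIdx_stable ⟨r₀, hr₀H, hr₀1, hr₀x, hr₀D⟩
        (fun r hr => hag (r, y) hr)).1
    have hk' : kIdx n D' x y = kIdx n D x y :=
      kIdx_congr (fun c => hag (x, c) (by simp only; omega))
    have hagR : ∀ r c, hIdx D x y ≤ r → r ≤ x → y ≤ c → c ≤ kIdx n D x y →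
        D' (r, c) = D (r, c) := fun r c h1 _ _ _ => hag (r, c) (le_trans hH h1)
    have ha' : maxBumpRow n D' x y = maxBumpRow n D x y :=
      maxBumpRow_congr hh' hk' (fun r c h1 h2 h3 h4 => hagR r c h1 (le_of_lt h2) h3 h4)
    have hbc' : minBumpCol n D' x y = minBumpCol n D x y :=
      minBumpCol_congr hh' hk' hagR
    rw [moveAux_succ, moveAux_succ (D := D'), hh', hk', ha', hbc']
    by_cases hbase : maxBumpRow n D x y = hIdx D x y ∧ minBumpCol n D x y = kIdx n D x y
    · rw [if_pos hbase, if_pos hbase]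
      constructor
      · intro st hst
        constructor <;>
        · rw [ladderMove_apply]
          rw [if_neg, if_neg]
          · rintro rfl; simp only at hst; omega
          · rintro rfl; simp only at hst; omega
      · intro st h1
        rw [ladderMove_apply, ladderMove_apply, hh', hk']
        split_ifs with hc1 hc2
        · rfl
        · rfl
        · exact hag st h1
    · rw [if_neg hbase, if_neg hbase]
      by_cases hii : hIdx D x y < maxBumpRow n D x y
      · rw [if_pos hii, if_pos hii]
        obtain ⟨ha1, hax, c₂, hc₂1, hc₂2, hc₂3⟩ := caseII_facts hb hx hii
        set a := maxBumpRow n D x y with haDef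
        have hb_sub : ∃ c, y + 1 ≤ c ∧ c ≤ n ∧ D (a, c) = false :=
          ⟨c₂, hc₂1, le_trans hc₂2 hk.2.1, hc₂3⟩
        have hcol_sub : ∃ r, H ≤ r ∧ 1 ≤ r ∧ r < a ∧ D (r, y) = false :=
          ⟨hIdx D x y, hH, hhs.1, hii, hhs.2.2⟩
        have IH1 := ih D D' a y H ha1 hb_sub hcol_sub hag
        set D₁ := moveAux n f D a y with hD₁
        set D₁' := moveAux n f D' a y with hD₁'
        have hag₂ : ∀ st : ℕ × ℕ, H ≤ st.1 → D₁' st = D₁ st := IH1.2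
        have hb₂ : ∃ c, y + 1 ≤ c ∧ c ≤ n ∧ D₁ (x, c) = false := by
          refine ⟨kIdx n D x y, hk.1, hk.2.1, ?_⟩
          rw [hD₁, rowBound f D a y _ (by simp only; omega)]
          exact hk.2.2
        have hcol₂ : ∃ r, H ≤ r ∧ 1 ≤ r ∧ r < x ∧ D₁ (r, y) = false := by
          refine ⟨hIdx D x y, hH, hhs.1, hhs.2.1, ?_⟩
          cases hE : D₁ (hIdx D x y, y) with
          | false => rfl
          | true =>
            exfalso
            rcases crossColMono f D a y _ hb_sub ha1 hE with h | h
            · rw [hhs.2.2] at h; exact absurd h (by simp)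
            · simp only at h; omega
        have IH2 := ih D₁ D₁' x y H hx hb₂ hcol₂ hag₂
        constructor
        · intro st hst
          exact ⟨by rw [(IH2.1 st hst).1, (IH1.1 st hst).1],
                 by rw [(IH2.1 st hst).2, (IH1.1 st hst).2]⟩
        · exact IH2.2
      · rw [if_neg hii, if_neg hii]
        obtain ⟨hEq, hbb1, hbb2, r₃, hr₃1, hr₃2, hr₃3⟩ := caseIII_facts hb hx hbase hii
        set b := minBumpCol n D x y with hbDef
        have hb_sub : ∃ c, b + 1 ≤ c ∧ c ≤ n ∧ D (x, c) = false :=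
          ⟨kIdx n D x y, by omega, hk.2.1, hk.2.2⟩
        have hcol_sub : ∃ r, H ≤ r ∧ 1 ≤ r ∧ r < x ∧ D (r, b) = false :=
          ⟨r₃, by omega, by omega, hr₃2, hr₃3⟩
        have IH1 := ih D D' x b H hx hb_sub hcol_sub hag
        set D₁ := moveAux n f D x b with hD₁
        set D₁' := moveAux n f D' x b with hD₁'
        have hag₂ : ∀ st : ℕ × ℕ, H ≤ st.1 → D₁' st = D₁ st := IH1.2
        have hb₂ : ∃ c, y + 1 ≤ c ∧ c ≤ n ∧ D₁ (x, c) = false :=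
          ⟨kIdx n D x y, hk.1, hk.2.1, hb_step hx hk.2.2 b⟩
        have hcol₂ : ∃ r, H ≤ r ∧ 1 ≤ r ∧ r < x ∧ D₁ (r, y) = false := by
          refine ⟨r₀, hr₀H, hr₀1, hr₀x, ?_⟩
          rw [(IH1.1 (r₀, y) (Or.inr (by simp only; omega))).1]
          exact hr₀D
        have IH2 := ih D₁ D₁' x y H hx hb₂ hcol₂ hag₂
        constructor
        · intro st hst
          have hst' : st.1 < H ∨ st.2 < b := by omega
          exact ⟨by rw [(IH2.1 st hst).1, (IH1.1 st hst').1],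
                 by rw [(IH2.1 st hst).2, (IH1.1 st hst').2]⟩
        · exact IH2.2

end PipeDream

namespace PipeDream

lemma maxBumpRow_stable {D D' : PipeDream} {x y P : ℕ}
    (hh : hIdx D' x y = hIdx D x y) (hk : kIdx n D' x y = kIdx n D x y)
    (hag : ∀ r c, P < r → D' (r, c) = D (r, c))
    (hw : ∃ r c, hIdx D x y ≤ r ∧ r < x ∧ y ≤ c ∧ c ≤ kIdx n D x y ∧ P < r ∧
      D (r, c) = false) :
    maxBumpRow n D' x y = maxBumpRow n D x y ∧ P < maxBumpRow n D x y := by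
  obtain ⟨r₁, c₁, h1, h2, h3, h4, h5, h6⟩ := hw
  have hr₁S : r₁ ≤ maxBumpRow n D x y := maxBumpRow_ge h1 h2 h3 h4 h6
  have hP : P < maxBumpRow n D x y := by omega
  have hr₁S' : r₁ ≤ maxBumpRow n D' x y := by
    have hhh : hIdx D' x y ≤ r₁ := by rw [hh]; omega
    have hkk : c₁ ≤ kIdx n D' x y := by rw [hk]; omega
    exact maxBumpRow_ge hhh h2 h3 hkk (by rw [hag r₁ c₁ h5]; exact h6)
  have hP' : 1 ≤ maxBumpRow n D' x y := by omega
  have hP'' : 1 ≤ maxBumpRow n D x y := by omega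
  constructor
  · apply le_antisymm
    · obtain ⟨ha1, ha2, c, hc1, hc2, hc3⟩ :=
        maxBumpRow_spec (n := n) (D := D') (x := x) (y := y) hP'
      rw [hh] at ha1
      rw [hk] at hc2
      have hPa : P < maxBumpRow n D' x y := by omega
      apply maxBumpRow_ge ha1 ha2 hc1 hc2
      rw [← hag _ c hPa]; exact hc3
    · obtain ⟨ha1, ha2, c, hc1, hc2, hc3⟩ :=
        maxBumpRow_spec (n := n) (D := D) (x := x) (y := y) hP''
      have hhh : hIdx D' x y ≤ maxBumpRow n D x y := by rw [hh]; omega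
      have hkk : c ≤ kIdx n D' x y := by rw [hk]; omega
      exact maxBumpRow_ge hhh ha2 hc1 hkk (by rw [hag _ c hP]; exact hc3)
  · exact hP

lemma hIdx_bump {D : PipeDream} {x y : ℕ} (h0 : 1 ≤ hIdx D x y) :
    hIdx D x y < x ∧ D (hIdx D x y, y) = false := by
  have hm := sup_mem_of_ne (S := (Finset.Ico 1 x).filter (fun h => D (h, y) = false))
    (Or.inl (show hIdx D x y ≠ 0 by omega))
  simp only [Finset.mem_filter, Finset.mem_Ico] at hm
  exact ⟨hm.1.2, hm.2⟩

/-- Quadrant invisibility: under the invariant, the move at `(x,y)` neither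
reads nor writes the quadrant `{row ≤ p, col ≥ q}`. -/
lemma qfree (p q : ℕ) : ∀ (f : ℕ) (D D' : PipeDream) (x y : ℕ),
    1 ≤ x →
    (∃ c, y + 1 ≤ c ∧ c ≤ n ∧ D (x, c) = false) →
    (kIdx n D x y < q ∨ p < hIdx D x y ∨
      (y < q ∧ ∃ r c, p < r ∧ r < x ∧ y ≤ c ∧ c < q ∧ D (r, c) = false)) →
    (∀ st : ℕ × ℕ, ¬(st.1 ≤ p ∧ q ≤ st.2) → D' st = D st) →
    (∀ st : ℕ × ℕ, st.1 ≤ p → q ≤ st.2 →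
      moveAux n f D x y st = D st ∧ moveAux n f D' x y st = D' st)
    ∧ (∀ st : ℕ × ℕ, ¬(st.1 ≤ p ∧ q ≤ st.2) →
      moveAux n f D' x y st = moveAux n f D x y st)
    ∧ (q ≤ kIdx n D x y → hIdx D x y ≤ p → y < q →
      ∃ r c, p < r ∧ r < x ∧ y ≤ c ∧ c < q ∧ moveAux n f D x y (r, c) = false) := by
  intro f
  induction f with
  | zero =>
    intro D D' x y hx hb hQOK hag
    refine ⟨fun st _ _ => ⟨rfl, rfl⟩, fun st h => hag st h, ?_⟩
    intro hq hp hyq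
    rcases hQOK with h | h | h
    · omega
    · omega
    · exact h.2
  | succ f ih =>
    intro D D' x y hx hb hQOK hag
    have hk := kIdx_spec (n := n) hb
    by_cases hclass1 : kIdx n D x y < q
    · -- Class 1: the whole move lives in columns < q.  Use `mega` with K = q-1.
      have hyq : y < q := by omega
      have hb_mega : ∃ c, y + 1 ≤ c ∧ c ≤ q - 1 ∧ c ≤ n ∧ D (x, c) = false :=
        ⟨kIdx n D x y, hk.1, by omega, hk.2.1, hk.2.2⟩
      have hag_mega : ∀ st : ℕ × ℕ, st.1 ≤ x → y ≤ st.2 → st.2 ≤ q - 1 → D' st = D st :=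
        fun st _ _ h3 => hag st (by omega)
      have M := mega (f+1) D D' x y (q-1) hx (by omega) hb_mega hag_mega
      refine ⟨?_, ?_, ?_⟩
      · intro st h1 h2
        exact M.1 st (Or.inr (by omega))
      · intro st hst
        by_cases h2 : y ≤ st.2 ∧ st.2 ≤ q - 1
        · by_cases h1 : st.1 ≤ x
          · exact M.2 st h1 h2.1 h2.2
          · rw [rowBound (f+1) D x y st (by omega), rowBound (f+1) D' x y st (by omega)]
            exact hag st hst
        · have := M.1 st (by omega)
          rw [this.1, this.2]
          exact hag st hst
      · intro hq _ _; omega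
    · by_cases hclass2 : p < hIdx D x y
      · -- Class 2: the whole move lives in rows > p.  Use `rowConf` with H = hIdx.
        have hh1 : 1 ≤ hIdx D x y := by omega
        have hhs := hIdx_bump hh1
        have hcol : ∃ r, hIdx D x y ≤ r ∧ 1 ≤ r ∧ r < x ∧ D (r, y) = false :=
          ⟨hIdx D x y, le_rfl, hh1, hhs.1, hhs.2⟩
        have hag_rc : ∀ st : ℕ × ℕ, hIdx D x y ≤ st.1 → D' st = D st :=
          fun st h => hag st (by omega)
        have RC := rowConf (f+1) D D' x y (hIdx D x y) hx hb hcol hag_rc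
        refine ⟨?_, ?_, ?_⟩
        · intro st h1 h2
          exact RC.1 st (Or.inl (by omega))
        · intro st hst
          by_cases h1 : hIdx D x y ≤ st.1
          · exact RC.2 st h1
          · have := RC.1 st (Or.inl (by omega))
            rw [this.1, this.2]
            exact hag st hst
        · intro _ hp _; omega
      · -- Class 3
        push_neg at hclass1 hclass2
        obtain ⟨hyq, r₀, c₀, hr₀p, hr₀x, hc₀y, hc₀q, hD₀⟩ : y < q ∧ ∃ r c,
            p < r ∧ r < x ∧ y ≤ c ∧ c < q ∧ D (r, c) = false := by
          rcases hQOK with h | h | h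
          · omega
          · omega
          · exact ⟨h.1, h.2⟩
        have hhr : hIdx D x y ≤ r₀ := by omega
        have hck : c₀ ≤ kIdx n D x y := by omega
        have haR : r₀ ≤ maxBumpRow n D x y := maxBumpRow_ge hhr hr₀x hc₀y hck hD₀
        have hap : p < maxBumpRow n D x y := by omega
        have hii : hIdx D x y < maxBumpRow n D x y := by omega
        have hbase : ¬(maxBumpRow n D x y = hIdx D x y ∧
            minBumpCol n D x y = kIdx n D x y) := by
          rintro ⟨h1, _⟩; omega
        -- index agreement with D'
        have hh' : hIdx D' x y = hIdx D x y :=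
          hIdx_congr (fun r _ => hag (r, y) (by simp only; omega))
        have hk' : kIdx n D' x y = kIdx n D x y :=
          kIdx_congr (fun c => hag (x, c) (by simp only; omega))
        have hagP : ∀ r c, p < r → D' (r, c) = D (r, c) :=
          fun r c h => hag (r, c) (by simp only; omega)
        have haSt := maxBumpRow_stable hh' hk' hagP
          ⟨r₀, c₀, hhr, hr₀x, hc₀y, hck, hr₀p, hD₀⟩
        have ha' := haSt.1
        have hbase' : ¬(maxBumpRow n D' x y = hIdx D' x y ∧
            minBumpCol n D' x y = kIdx n D' x y) := by
          rintro ⟨h1, _⟩; rw [ha', hh'] at h1; omega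
        have hii' : hIdx D' x y < maxBumpRow n D' x y := by rw [ha', hh']; omega
        rw [moveAux_succ, moveAux_succ (D := D'), if_neg hbase, if_neg hbase',
          if_pos hii, if_pos hii', ha']
        obtain ⟨ha1, hax, c₂, hc₂1, hc₂2, hc₂3⟩ := caseII_facts hb hx hii
        set a := maxBumpRow n D x y with haDef
        have hb_sub : ∃ c, y + 1 ≤ c ∧ c ≤ n ∧ D (a, c) = false :=
          ⟨c₂, hc₂1, le_trans hc₂2 hk.2.1, hc₂3⟩
        have hQOK_sub : kIdx n D a y < q ∨ p < hIdx D a y ∨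
            (y < q ∧ ∃ r c, p < r ∧ r < a ∧ y ≤ c ∧ c < q ∧ D (r, c) = false) := by
          by_cases hs1 : kIdx n D a y < q
          · exact Or.inl hs1
          by_cases hs2 : p < hIdx D a y
          · exact Or.inr (Or.inl hs2)
          push_neg at hs1 hs2
          refine Or.inr (Or.inr ⟨hyq, r₀, c₀, hr₀p, ?_, hc₀y, hc₀q, hD₀⟩)
          rcases Nat.eq_or_lt_of_le haR with hEq | h
          · exfalso
            rcases Nat.eq_or_lt_of_le hc₀y with hcy | hcy
            · have hDa : D (a, y) = false := by rw [← hEq, hcy]; exact hD₀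
              have := hIdx_ge (by omega) hax hDa
              omega
            · have hDa : D (a, c₀) = false := by rw [← hEq]; exact hD₀
              have : kIdx n D a y ≤ c₀ := kIdx_le (by omega) (by omega) hDa
              omega
          · exact h
        have IH1 := ih D D' a y ha1 hb_sub hQOK_sub hag
        set D₁ := moveAux n f D a y with hD₁def
        set D₁' := moveAux n f D' a y with hD₁'def
        have hag₂ : ∀ st : ℕ × ℕ, ¬(st.1 ≤ p ∧ q ≤ st.2) → D₁' st = D₁ st := IH1.2.1
        have hrowB : ∀ c : ℕ, D₁ (x, c) = D (x, c) := by
          intro c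
          show moveAux n f D a y (x, c) = D (x, c)
          exact rowBound f D a y (x, c) (by simp only; omega)
        have hb₂ : ∃ c, y + 1 ≤ c ∧ c ≤ n ∧ D₁ (x, c) = false := by
          refine ⟨kIdx n D x y, hk.1, hk.2.1, ?_⟩
          rw [hrowB]; exact hk.2.2
        have hk₂ : kIdx n D₁ x y = kIdx n D x y := kIdx_congr hrowB
        -- a witness bump below row p, left of column q, surviving in D₁
        have hwit₁ : ∃ r c, p < r ∧ r < x ∧ y ≤ c ∧ c < q ∧ D₁ (r, c) = false := by
          by_cases hs1 : kIdx n D a y < q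
          · have hka := kIdx_spec (n := n) hb_sub
            refine ⟨a, kIdx n D a y, by omega, by omega, by omega, hs1, ?_⟩
            cases hE : D₁ (a, kIdx n D a y) with
            | false => rfl
            | true =>
              exfalso
              rcases crossRowMono f D a y _ ha1 hE with h | h
              · rw [hka.2.2] at h; exact absurd h (by simp)
              · simp only at h; omega
          · by_cases hs2 : p < hIdx D a y
            · have hha1 : 1 ≤ hIdx D a y := by omega
              have hhas := hIdx_bump hha1
              refine ⟨hIdx D a y, y, hs2, by omega, le_rfl, hyq, ?_⟩
              cases hE : D₁ (hIdx D a y, y) with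
              | false => rfl
              | true =>
                exfalso
                rcases crossColMono f D a y _ hb_sub ha1 hE with h | h
                · rw [hhas.2] at h; exact absurd h (by simp)
                · simp only at h; omega
            · push_neg at hs1 hs2
              obtain ⟨r, c, h1, h2, h3, h4, h5⟩ := IH1.2.2 hs1 hs2 hyq
              exact ⟨r, c, h1, by omega, h3, h4, h5⟩
        obtain ⟨rw₁, cw₁, hw₁1, hw₁2, hw₁3, hw₁4, hw₁5⟩ := hwit₁
        have hQOK₂ : kIdx n D₁ x y < q ∨ p < hIdx D₁ x y ∨
            (y < q ∧ ∃ r c, p < r ∧ r < x ∧ y ≤ c ∧ c < q ∧ D₁ (r, c) = false) :=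
          Or.inr (Or.inr ⟨hyq, rw₁, cw₁, hw₁1, hw₁2, hw₁3, hw₁4, hw₁5⟩)
        have IH2 := ih D₁ D₁' x y hx hb₂ hQOK₂ hag₂
        refine ⟨?_, IH2.2.1, ?_⟩
        · intro st h1 h2
          exact ⟨by rw [(IH2.1 st h1 h2).1, (IH1.1 st h1 h2).1],
                 by rw [(IH2.1 st h1 h2).2, (IH1.1 st h1 h2).2]⟩
        · intro _ _ _
          by_cases hp₂ : p < hIdx D₁ x y
          · have h1₂ : 1 ≤ hIdx D₁ x y := by omega
            have hhs₂ := hIdx_bump h1₂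
            refine ⟨hIdx D₁ x y, y, hp₂, hhs₂.1, le_rfl, hyq, ?_⟩
            cases hE : moveAux n f D₁ x y (hIdx D₁ x y, y) with
            | false => rfl
            | true =>
              exfalso
              rcases crossColMono f D₁ x y _ hb₂ hx hE with h | h
              · rw [hhs₂.2] at h; exact absurd h (by simp)
              · simp only at h; omega
          · push_neg at hp₂
            exact IH2.2.2 (by rw [hk₂]; omega) hp₂ hyq

end PipeDream

namespace PipeDream

lemma min_untop_mem' {S : Finset ℕ} {d : ℕ} (h : S.Nonempty) : WithTop.untopD d S.min ∈ S := by
  rw [← Finset.coe_min' h]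
  exact S.min'_mem h

lemma min_untop_le' {S : Finset ℕ} {d b : ℕ} (hb : b ∈ S) : WithTop.untopD d S.min ≤ b := by
  have h : S.Nonempty := ⟨b, hb⟩
  rw [← Finset.coe_min' h]
  exact S.min'_le b hb

lemma kIdx_le_n {D : PipeDream} {x y : ℕ} : kIdx n D x y ≤ n ∨ kIdx n D x y = 0 := by
  by_cases h : ((Finset.Icc (y+1) n).filter (fun k => D (x, k) = false)).Nonempty
  · left
    have := min_untop_mem (h := h)
    simp only [Finset.mem_filter, Finset.mem_Icc] at this
    exact this.1.2
  · right
    rw [Finset.not_nonempty_iff_eq_empty] at h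
    unfold kIdx
    rw [h]
    rfl

/-- Path witness: if the path never meets column `q` at a row `≤ p`, then there
is a bump strictly below row `p`, strictly left of column `q`. -/
lemma pathWitness (D : PipeDream) (i j p q : ℕ)
    (row0 : ∀ c, D (0, c) = false) (hj : 1 ≤ j) (hjn : j ≤ n)
    (hhp : hIdx D i j ≤ p) (hq : j ≤ q) :
    ∀ (f P Q : ℕ), 1 ≤ P → P ≤ f → P ≤ i → q ≤ Q →
    (∃ r, r ≤ p ∧ (r, q) ∈ pathAux n D j f (P, Q)) ∨
    (∃ r c, p < r ∧ r < i ∧ j ≤ c ∧ c < q ∧ D (r, c) = false) := by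
  intro f
  induction f with
  | zero => intro P Q h1 h2; omega
  | succ f ih =>
    intro P Q hP1 hPf hPi hqQ
    set p' := maxBumpRow n D P j with hp'def
    set q' := WithTop.untopD j (((Finset.Icc j n).filter (fun t => D (p', t) = false)).min)
      with hq'def
    have hpath : pathAux n D j (f+1) (P, Q) =
        (if q' = j then
          ((Finset.Icc p' P).image fun r => (r, Q)) ∪ ((Finset.Icc q' Q).image fun t => (p', t))
        else
          (((Finset.Icc p' P).image fun r => (r, Q)) ∪
            ((Finset.Icc q' Q).image fun t => (p', t))) ∪ pathAux n D j f (p', q')) := rfl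
    have hp'P : p' < P := maxBumpRow_lt hP1
    -- attained facts for q'
    have hfil : ((Finset.Icc j n).filter (fun t => D (p', t) = false)).Nonempty := by
      rcases Nat.eq_zero_or_pos p' with h0 | h0
      · refine ⟨j, ?_⟩
        simp only [Finset.mem_filter, Finset.mem_Icc]
        exact ⟨⟨le_rfl, hjn⟩, by rw [h0]; exact row0 j⟩
      · obtain ⟨_, _, c₃, hc₃1, hc₃2, hc₃3⟩ := maxBumpRow_spec (n := n) (D := D) (x := P) (y := j) h0
        have hkn : kIdx n D P j ≤ n := by
          rcases kIdx_le_n (n := n) (D := D) (x := P) (y := j) with h | h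
          · exact h
          · omega
        refine ⟨c₃, ?_⟩
        simp only [Finset.mem_filter, Finset.mem_Icc]
        exact ⟨⟨hc₃1, by omega⟩, hc₃3⟩
    have hq'mem := min_untop_mem' (d := j) hfil
    simp only [Finset.mem_filter, Finset.mem_Icc] at hq'mem
    obtain ⟨⟨hq'j, hq'n⟩, hq'D⟩ := hq'mem
    rw [hpath]
    by_cases hq'eq : q' = j
    · rw [if_pos hq'eq]
      -- the tile (p', q) is on the horizontal segment
      have htile : (p', q) ∈
          (((Finset.Icc p' P).image fun r => (r, Q)) ∪
            ((Finset.Icc q' Q).image fun t => (p', t))) := by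
        apply Finset.mem_union_right
        exact Finset.mem_image_of_mem _ (Finset.mem_Icc.2 ⟨by omega, by omega⟩)
      by_cases hpp : p' ≤ p
      · exact Or.inl ⟨p', hpp, htile⟩
      · -- p < p'; note p' ≥ 1
        have hp'1 : 1 ≤ p' := by omega
        rcases Nat.eq_or_lt_of_le hq with hjq | hjq
        · -- q = j : contradiction with hIdx D i j ≤ p
          exfalso
          have hbump : D (p', j) = false := by rw [← hq'eq]; exact hq'D
          have := hIdx_ge (x := i) hp'1 (by omega) hbump
          omega
        · exact Or.inr ⟨p', j, by omega, by omega, le_rfl, hjq,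
            by rw [← hq'eq]; exact hq'D⟩
    · rw [if_neg hq'eq]
      have hp'1 : 1 ≤ p' := by
        rcases Nat.eq_zero_or_pos p' with h0 | h0
        · exfalso
          apply hq'eq
          have : q' ≤ j := min_untop_le' (by
            simp only [Finset.mem_filter, Finset.mem_Icc]
            exact ⟨⟨le_rfl, hjn⟩, by rw [h0]; exact row0 j⟩)
          omega
        · exact h0
      by_cases hqq' : q' ≤ q
      · have hf' : p' ≤ f := by omega
        have hi' : p' ≤ i := by omega
        have htile : (p', q) ∈
            (((Finset.Icc p' P).image fun r => (r, Q)) ∪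
              ((Finset.Icc q' Q).image fun t => (p', t))) := by
          apply Finset.mem_union_right
          exact Finset.mem_image_of_mem _ (Finset.mem_Icc.2 ⟨hqq', hqQ⟩)
        by_cases hpp : p' ≤ p
        · exact Or.inl ⟨p', hpp, Finset.mem_union_left _ htile⟩
        · rcases Nat.eq_or_lt_of_le hqq' with hqe | hqe
          · -- q' = q : recurse
            rcases ih p' q' hp'1 hf' hi' hqe.ge with ⟨r, hr1, hr2⟩ | hw
            · exact Or.inl ⟨r, hr1, Finset.mem_union_right _ hr2⟩
            · exact Or.inr hw
          · -- q' < q : witness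
            exact Or.inr ⟨p', q', by omega, by omega, hq'j, hqe, hq'D⟩
      · -- q < q' : recurse
        have hf' : p' ≤ f := by omega
        have hi' : p' ≤ i := by omega
        rcases ih p' q' hp'1 hf' hi' (le_of_lt (lt_of_not_ge hqq'))
          with ⟨r, hr1, hr2⟩ | hw
        · exact Or.inl ⟨r, hr1, Finset.mem_union_right _ hr2⟩
        · exact Or.inr hw

end PipeDream

namespace PipeDream

lemma movable_bump_right {D : PipeDream} {x y : ℕ} (hstair : InStaircase n D)
    (hcross : D (x, y) = true) (h2 : 2 ≤ x) :
    ∃ c, y + 1 ≤ c ∧ c ≤ n ∧ D (x, c) = false := by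
  obtain ⟨hx1, hy1, hxy⟩ := hstair x y hcross
  refine ⟨n + 2 - x, by omega, by omega, ?_⟩
  cases hE : D (x, n + 2 - x) with
  | false => rfl
  | true =>
    exfalso
    obtain ⟨_, _, h⟩ := hstair x (n + 2 - x) hE
    omega

end PipeDream

open PipeDream in
/-- if (p,q) is northeast of (i,j) and not in Shape_{ij}(D),
then M_{ij} and M_{pq} commute. -/
theorem stmt7 (n : ℕ) (w : Equiv.Perm ℕ) (D : PipeDream) (hD : D ∈ RPD n w)
    (i j p q : ℕ) (h1 : Movable D i j) (h2 : Movable D p q)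
    (hne : NorthEastOf p q i j) (hne' : (p, q) ≠ (i, j))
    (hnotin : (p, q) ∉ Shape n D i j) :
    move n (move n D p q) i j = move n (move n D i j) p q := by
  obtain ⟨hstair, -, -⟩ := hD
  obtain ⟨hDij, h₀, hh₀1, hh₀i, hBij⟩ := h1
  obtain ⟨hDpq, g₀, hg₀1, hg₀p, hBpq⟩ := h2
  obtain ⟨hpi, hjq⟩ := hne
  obtain ⟨hi1, hj1, hijn⟩ := hstair i j hDij
  obtain ⟨hp1, hq1, hpqn⟩ := hstair p q hDpq
  have hi2 : 2 ≤ i := by omega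
  have hp2 : 2 ≤ p := by omega
  have hqn : q ≤ n := by omega
  have hjn : j ≤ n := by omega
  -- invariant bumps
  have hbi : ∃ c, j + 1 ≤ c ∧ c ≤ n ∧ D (i, c) = false := movable_bump_right hstair hDij hi2
  have hbp : ∃ c, q + 1 ≤ c ∧ c ≤ n ∧ D (p, c) = false := movable_bump_right hstair hDpq hp2
  have hhs := hIdx_spec (D := D) (x := i) (y := j) ⟨h₀, hh₀1, hh₀i, hBij⟩
  have hk := kIdx_spec (n := n) (D := D) (x := i) (y := j) hbi
  set F := (n + 2) ^ (n + 2) with hFdef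
  have hx : 1 ≤ i := by omega
  have hpx : 1 ≤ p := by omega
  -- untouched-region facts for the two moves applied to D itself
  have M_A0 := mega F D D i j (kIdx n D i j) hx (by omega)
    ⟨kIdx n D i j, hk.1, le_rfl, hk.2.1, hk.2.2⟩ (fun _ _ _ _ => rfl)
  have M_B0 := mega F D D p q n hpx hqn
    (by obtain ⟨c, hc1, hc2, hc3⟩ := hbp; exact ⟨c, hc1, hc2, hc2, hc3⟩)
    (fun _ _ _ _ => rfl)
  show moveAux n F (moveAux n F D p q) i j = moveAux n F (moveAux n F D i j) p q
  funext st
  by_cases hcase1 : kIdx n D i j < q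
  · -- CASE 1 : (p,q) strictly to the right of Rect.
    have hagA : ∀ st : ℕ × ℕ, st.1 ≤ i → j ≤ st.2 → st.2 ≤ kIdx n D i j → moveAux n F D p q st = D st :=
      fun st _ _ h3 => (M_B0.1 st (Or.inl (by omega))).1
    have M_A := mega F D (moveAux n F D p q) i j (kIdx n D i j) hx (by omega)
      ⟨kIdx n D i j, hk.1, le_rfl, hk.2.1, hk.2.2⟩ hagA
    have hagB : ∀ st : ℕ × ℕ, st.1 ≤ p → q ≤ st.2 → st.2 ≤ n → moveAux n F D i j st = D st :=
      fun st _ h2 _ => (M_A0.1 st (Or.inr (by omega))).1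
    have M_B := mega F D (moveAux n F D i j) p q n hpx hqn
      (by obtain ⟨c, hc1, hc2, hc3⟩ := hbp; exact ⟨c, hc1, hc2, hc2, hc3⟩) hagB
    by_cases hsa : j ≤ st.2 ∧ st.2 ≤ kIdx n D i j
    · by_cases hra : st.1 ≤ i
      · rw [M_A.2 st hra hsa.1 hsa.2]
        rw [(M_B.1 st (Or.inl (by omega))).2]
      · rw [rowBound F (moveAux n F D p q) i j st (by omega)]
        rw [(M_B.1 st (Or.inl (by omega))).2, rowBound F D i j st (by omega)]
        exact (M_B0.1 st (Or.inl (by omega))).1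
    · have hsa' : st.2 < j ∨ kIdx n D i j < st.2 := by omega
      rw [(M_A.1 st hsa').2]
      by_cases hsb : st.1 ≤ p ∧ q ≤ st.2 ∧ st.2 ≤ n
      · rw [M_B.2 st hsb.1 hsb.2.1 hsb.2.2]
      · by_cases hsb2 : st.2 < q ∨ n < st.2
        · rw [(M_B.1 st hsb2).2, (M_A0.1 st hsa').1, (M_B0.1 st hsb2).1]
        · rw [rowBound F (moveAux n F D i j) p q st (by omega), rowBound F D p q st (by omega)]
          exact ((M_A0.1 st hsa').1).symm
  · by_cases hcase2 : p < hIdx D i j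
    · -- CASE 2 : (p,q) strictly above Rect.
      have hcolA : ∃ r, hIdx D i j ≤ r ∧ 1 ≤ r ∧ r < i ∧ D (r, j) = false :=
        ⟨hIdx D i j, le_rfl, hhs.1, hhs.2.1, hhs.2.2⟩
      have RC_A0 := rowConf F D D i j (hIdx D i j) hx hbi hcolA (fun _ _ => rfl)
      have hagA : ∀ st : ℕ × ℕ, hIdx D i j ≤ st.1 → moveAux n F D p q st = D st :=
        fun st hst => rowBound F D p q st (by omega)
      have RC_A := rowConf F D (moveAux n F D p q) i j (hIdx D i j) hx hbi hcolA hagA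
      have hagB : ∀ st : ℕ × ℕ, st.1 ≤ p → q ≤ st.2 → st.2 ≤ n → moveAux n F D i j st = D st :=
        fun st h1 _ _ => (RC_A0.1 st (Or.inl (by omega))).1
      have M_B := mega F D (moveAux n F D i j) p q n hpx hqn
        (by obtain ⟨c, hc1, hc2, hc3⟩ := hbp; exact ⟨c, hc1, hc2, hc2, hc3⟩) hagB
      by_cases hsa : hIdx D i j ≤ st.1
      · rw [RC_A.2 st hsa, rowBound F (moveAux n F D i j) p q st (by omega)]
      · rw [(RC_A.1 st (Or.inl (by omega))).2]
        by_cases hsb : st.1 ≤ p ∧ q ≤ st.2 ∧ st.2 ≤ n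
        · rw [M_B.2 st hsb.1 hsb.2.1 hsb.2.2]
        · by_cases hrb : p < st.1
          · rw [rowBound F (moveAux n F D i j) p q st (by omega), rowBound F D p q st (by omega)]
            exact ((RC_A0.1 st (Or.inl (by omega))).1).symm
          · have hsb2 : st.2 < q ∨ n < st.2 := by omega
            rw [(M_B.1 st hsb2).2, (RC_A0.1 st (Or.inl (by omega))).1,
              (M_B0.1 st hsb2).1]
    · -- CASE 3 : (p,q) ∈ Rect, strictly above the path.
      push_neg at hcase1 hcase2
      have hRect : (p, q) ∈ Rect n D i j := by
        simp only [Rect, Finset.mem_Icc, Prod.le_def]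
        exact ⟨⟨hcase2, hjq⟩, hpi, hcase1⟩
      have hnopath : ¬ ∃ p' ≤ p, (p', q) ∈ Path n D i j := by
        intro hex
        exact hnotin (Finset.mem_filter.2 ⟨hRect, hex⟩)
      have row0 : ∀ c, D (0, c) = false := by
        intro c
        cases hE : D (0, c) with
        | false => rfl
        | true => exact absurd (hstair 0 c hE).1 (by omega)
      have PW := pathWitness D i j p q row0 hj1 hjn hcase2 hjq i i (kIdx n D i j)
        hx le_rfl le_rfl hcase1
      rcases PW with ⟨r, hr1, hr2⟩ | ⟨r₀, c₀, hr₀1, hr₀2, hc₀1, hc₀2, hD₀⟩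
      · exact absurd ⟨r, hr1, hr2⟩ hnopath
      have hjq' : j < q := by omega
      have QOK : kIdx n D i j < q ∨ p < hIdx D i j ∨
          (j < q ∧ ∃ r c, p < r ∧ r < i ∧ j ≤ c ∧ c < q ∧ D (r, c) = false) :=
        Or.inr (Or.inr ⟨hjq', r₀, c₀, hr₀1, hr₀2, hc₀1, hc₀2, hD₀⟩)
      have hagA : ∀ st : ℕ × ℕ, ¬(st.1 ≤ p ∧ q ≤ st.2) → moveAux n F D p q st = D st := by
        intro st hst
        by_cases hr : p < st.1
        · exact rowBound F D p q st hr
        · exact (M_B0.1 st (Or.inl (by omega))).1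
      have QF := qfree p q F D (moveAux n F D p q) i j hx hbi QOK hagA
      have hagB : ∀ st : ℕ × ℕ, st.1 ≤ p → q ≤ st.2 → st.2 ≤ n → moveAux n F D i j st = D st :=
        fun st h1 h2 _ => (QF.1 st h1 h2).1
      have M_B := mega F D (moveAux n F D i j) p q n hpx hqn
        (by obtain ⟨c, hc1, hc2, hc3⟩ := hbp; exact ⟨c, hc1, hc2, hc2, hc3⟩) hagB
      by_cases hsq : st.1 ≤ p ∧ q ≤ st.2
      · by_cases hsn : st.2 ≤ n
        · rw [(QF.1 st hsq.1 hsq.2).2, M_B.2 st hsq.1 hsq.2 hsn]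
        · rw [(QF.1 st hsq.1 hsq.2).2, (M_B.1 st (Or.inr (by omega))).2,
            (QF.1 st hsq.1 hsq.2).1, (M_B0.1 st (Or.inr (by omega))).1]
      · rw [QF.2.1 st hsq]
        by_cases hrb : p < st.1
        · rw [rowBound F (moveAux n F D i j) p q st hrb]
        · have hsb2 : st.2 < q ∨ n < st.2 := by omega
          rw [(M_B.1 st hsb2).2]
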